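/- arXiv:1308.0789 — 9 statements merged into one kernel-verified Lean document; each statement's English description precedes it below -/
import Mathlib

section
/- Let X be a real Banach space and D ⊆ X a bounded, closed, convex set containing at least two points. Then δ(D') ≤ 2·δ(D) − 2·r'(D), where r'(D) is the inner radius of D. -/
open Metric Set Bornology

variable {X : Type*}

/-- `frad A x` is r(A,x) = sup of distances from x to points of A. -/
noncomputable def frad [NormedAddCommGroup X] (A : Set X) (x : X) : ℝ :=
  sSup ((fun a => dist x a) '' A)

/-- `rad A` is the (Chebyshev) radius r(A) = inf over x in the space of r(A,x). -/
noncomputable def rad [NormedAddCommGroup X] (A : Set X) : ℝ :=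
  sInf (Set.range fun x => frad A x)

/-- `selfRad A` is the self-radius r(A,A) = inf over x ∈ A of r(A,x). -/
noncomputable def selfRad [NormedAddCommGroup X] (A : Set X) : ℝ :=
  sInf ((fun x => frad A x) '' A)

/-- The ball intersection D' of D. -/
noncomputable def ballInt [NormedAddCommGroup X] (D : Set X) : Set X :=
  ⋂ x ∈ D, closedBall x (Metric.diam D)

/-- The ball hull D^c of D. -/
noncomputable def ballHull [NormedAddCommGroup X] (D : Set X) : Set X :=
  ⋂ x ∈ {y : X | D ⊆ closedBall y (Metric.diam D)}, closedBall x (Metric.diam D)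

/-- A set is diametrically maximal (complete) if adjoining any outside point
increases the diameter. -/
def IsDM [NormedAddCommGroup X] (C : Set X) : Prop :=
  ∀ x ∉ C, Metric.diam C < Metric.diam (insert x C)

/-- `C` is a completion of `D`: a diametrically maximal set containing `D`
with the same diameter. -/
def IsCompletion [NormedAddCommGroup X] (D C : Set X) : Prop :=
  IsDM C ∧ D ⊆ C ∧ Metric.diam C = Metric.diam D

/-- `irad' D d` is r'(D,d) = inf of distances from d to points outside D. -/
noncomputable def irad' [NormedAddCommGroup X] (D : Set X) (d : X) : ℝ :=
  sInf ((fun x => dist x d) '' Dᶜ)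

/-- `irad D` is the inner radius r'(D) = sup over d ∈ D of r'(D,d). -/
noncomputable def irad [NormedAddCommGroup X] (D : Set X) : ℝ :=
  sSup ((fun d => irad' D d) '' D)

/-- δ(D') ≤ 2δ(D) − 2r'(D). -/
theorem stmt1 [NormedAddCommGroup X] [NormedSpace ℝ X] [CompleteSpace X]
    (D : Set X) (hDb : IsBounded D) (hDcl : IsClosed D) (hDcv : Convex ℝ D)
    (hDnt : D.Nontrivial) :
    Metric.diam (ballInt D) ≤ 2 * Metric.diam D - 2 * irad D := by
  classical
  obtain ⟨a, haD, b, hbD, hab⟩ := hDnt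
  set δ := Metric.diam D with hδ
  have hab' : a - b ≠ 0 := sub_ne_zero.mpr hab
  set e : X := ‖a - b‖⁻¹ • (a - b) with he
  have he1 : ‖e‖ = 1 := by
    rw [he, norm_smul, norm_inv, norm_norm, inv_mul_cancel₀ (norm_ne_zero_iff.mpr hab')]
  -- membership in ballInt
  have hmem : ∀ u ∈ ballInt D, ∀ y ∈ D, dist u y ≤ δ := by
    intro u hu y hy
    have := Set.mem_iInter₂.mp hu y hy
    simpa [Metric.mem_closedBall, dist_comm] using this
  have key : ∀ u ∈ ballInt D, ∀ d ∈ D, dist u d + irad' D d ≤ δ := by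
    intro u hu d hd
    have hud : dist u d ≤ δ := hmem u hu d hd
    have step : ∀ t : ℝ, 0 ≤ t → t < irad' D d → dist u d + t ≤ δ := by
      intro t ht0 htr
      set w : X := if h : u = d then e else ‖u - d‖⁻¹ • (u - d) with hw
      have hw1 : ‖w‖ = 1 := by
        rw [hw]; split
        · exact he1
        · rename_i h
          rw [norm_smul, norm_inv, norm_norm,
            inv_mul_cancel₀ (norm_ne_zero_iff.mpr (sub_ne_zero.mpr h))]
      set y : X := d - t • w with hy
      have hyd : dist y d = t := by
        rw [hy, dist_eq_norm]
        simp [norm_smul, hw1, abs_of_nonneg ht0]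
      have hyD : y ∈ D := by
        by_contra hyc
        have hle : irad' D d ≤ dist y d := by
          apply csInf_le
          · exact ⟨0, fun z hz => by
              obtain ⟨x, hx, rfl⟩ := hz; exact dist_nonneg⟩
          · exact ⟨y, hyc, rfl⟩
        rw [hyd] at hle; linarith
      have huy : dist u y ≤ δ := hmem u hu y hyD
      have hval : dist u y = dist u d + t := by
        rw [hy, dist_eq_norm, dist_eq_norm,
          show u - (d - t • w) = (u - d) + t • w from by abel]
        by_cases h : u = d
        · subst h; simp [hw, norm_smul, he1, abs_of_nonneg ht0]
        · have hw' : w = ‖u - d‖⁻¹ • (u - d) := by rw [hw, dif_neg h]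
          have hnd : ‖u - d‖ ≠ 0 := norm_ne_zero_iff.mpr (sub_ne_zero.mpr h)
          rw [hw', smul_smul, show (u - d : X) + (t * ‖u - d‖⁻¹) • (u - d)
              = (1 + t * ‖u - d‖⁻¹) • (u - d) by rw [add_smul, one_smul],
            norm_smul, Real.norm_eq_abs]
          have hpos : 0 ≤ 1 + t * ‖u - d‖⁻¹ := by
            have : 0 ≤ t * ‖u - d‖⁻¹ := mul_nonneg ht0 (inv_nonneg.mpr (norm_nonneg _))
            linarith
          rw [abs_of_nonneg hpos]
          field_simp
      linarith
    by_contra hcon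
    push_neg at hcon
    have h1 : 0 ≤ δ - dist u d := by linarith
    set t := (δ - dist u d + irad' D d) / 2 with ht
    have h2 : 0 ≤ t := by rw [ht]; linarith
    have h3 : t < irad' D d := by rw [ht]; linarith
    have := step t h2 h3
    rw [ht] at this; linarith
  -- pairwise bound
  have pair : ∀ u ∈ ballInt D, ∀ v ∈ ballInt D, dist u v ≤ 2 * δ - 2 * irad D := by
    intro u hu v hv
    have hsup : irad D ≤ δ - dist u v / 2 := by
      show sSup ((fun d => irad' D d) '' D) ≤ δ - dist u v / 2
      refine csSup_le ⟨irad' D a, a, haD, rfl⟩ ?_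
      rintro x ⟨d, hd, rfl⟩
      have h1 := key u hu d hd
      have h2 := key v hv d hd
      have h3 : dist u v ≤ dist u d + dist v d := by
        rw [dist_comm v d]; exact dist_triangle u d v
      linarith
    linarith
  -- nonnegativity of bound
  have haB : a ∈ ballInt D := by
    apply Set.mem_iInter₂.mpr
    intro x hx
    exact Metric.mem_closedBall.mpr (Metric.dist_le_diam_of_mem hDb haD hx)
  have h0 : 0 ≤ 2 * δ - 2 * irad D := by
    have := pair a haB a haB; simpa using this
  exact Metric.diam_le_of_forall_dist_le h0 fun u hu v hv => pair u hu v hv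
end

section
/- Let X be a real Banach space and D ⊆ X a bounded, closed, convex set containing at least two points. Then H(D, D') ≤ δ(D) − 2·r'(D) ≤ 2·(r(D) − r'(D)), where H denotes the Hausdorff distance. -/
/-! Fix `d ∈ D` and `y ∈ D'`, and put `ρ = r'(D,d)`. The closed ball `B(d, ρ)` lies in `D`. If
`‖y - d‖ > ρ`, its point on the segment towards `y` is at distance `‖y - d‖ - ρ` from `y`, while
the antipodal point is at distance `‖y - d‖ + ρ ≤ δ(D)`; so `dist(y, D) ≤ δ(D) - 2ρ`. Otherwise
`y ∈ D` and `2ρ = δ(B(d, ρ)) ≤ δ(D)`. The second inequality is `δ(D) ≤ 2 r(D,x)` for every `x`,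
by the triangle inequality through `x`. -/

open Metric Set Bornology

variable {X : Type*}

section Elementary

variable [NormedAddCommGroup X] {A D : Set X}

lemma dist_le_frad (hA : IsBounded A) (x : X) {a : X} (ha : a ∈ A) : dist x a ≤ frad A x := by
  obtain ⟨r, hr⟩ := (isBounded_iff_subset_closedBall x).mp hA
  refine le_csSup ⟨r, ?_⟩ (mem_image_of_mem _ ha)
  rintro _ ⟨b, hb, rfl⟩
  exact (dist_comm x b).trans_le (hr hb)

lemma frad_nonneg (A : Set X) (x : X) : 0 ≤ frad A x :=
  Real.sSup_nonneg (by rintro _ ⟨a, -, rfl⟩; exact dist_nonneg)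

lemma diam_le_two_mul_frad (hA : IsBounded A) (x : X) : diam A ≤ 2 * frad A x := by
  refine diam_le_of_forall_dist_le (by linarith [frad_nonneg A x]) fun p hp q hq => ?_
  calc dist p q ≤ dist x p + dist x q := dist_triangle_left p q x
    _ ≤ 2 * frad A x := by linarith [dist_le_frad hA x hp, dist_le_frad hA x hq]

lemma diam_le_two_mul_rad (hA : IsBounded A) : diam A ≤ 2 * rad A := by
  have : diam A / 2 ≤ rad A := le_csInf (range_nonempty _) <| by
    rintro _ ⟨x, rfl⟩
    linarith [diam_le_two_mul_frad hA x]
  linarith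

lemma irad'_nonneg (D : Set X) (d : X) : 0 ≤ irad' D d :=
  Real.sInf_nonneg (by rintro _ ⟨x, -, rfl⟩; exact dist_nonneg)

lemma ball_irad'_subset (D : Set X) (d : X) : ball d (irad' D d) ⊆ D := by
  intro x hx
  by_contra hxD
  have : irad' D d ≤ dist x d :=
    csInf_le ⟨0, by rintro _ ⟨z, -, rfl⟩; exact dist_nonneg⟩ ⟨x, hxD, rfl⟩
  exact (mem_ball.mp hx).not_ge this

lemma subset_ballInt (hD : IsBounded D) : D ⊆ ballInt D :=
  fun _ hx => mem_iInter₂.mpr fun _ hz => dist_le_diam_of_mem hD hx hz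

lemma irad_le (hD : D.Nonempty) {c : ℝ} (h : ∀ d ∈ D, irad' D d ≤ c) : irad D ≤ c :=
  csSup_le (hD.image _) (by rintro _ ⟨d, hd, rfl⟩; exact h d hd)

end Elementary

section Normed

variable [NormedAddCommGroup X] [NormedSpace ℝ X] {D : Set X}

lemma closedBall_irad'_subset (hD : IsClosed D) {d : X} (hd : d ∈ D) :
    closedBall d (irad' D d) ⊆ D := by
  rcases (irad'_nonneg D d).eq_or_lt with h | h
  · rw [← h, closedBall_zero]
    exact singleton_subset_iff.mpr hd
  · rw [← closure_ball d h.ne']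
    exact hD.closure_subset_iff.mpr (ball_irad'_subset D d)

lemma two_mul_irad'_le_diam (hDb : IsBounded D) (hDcl : IsClosed D) {d : X} (hd : d ∈ D) :
    2 * irad' D d ≤ diam D := by
  rcases (irad'_nonneg D d).eq_or_lt with h | h
  · rw [← h, mul_zero]
    exact diam_nonneg
  · -- `irad' D d` is `sInf ∅ = 0` unless `D` misses some point, which makes `X` nontrivial.
    obtain ⟨x, hx⟩ : Dᶜ.Nonempty := by
      by_contra hne
      rw [not_nonempty_iff_eq_empty] at hne
      simp [irad', hne] at h
    have : Nontrivial X := ⟨⟨x, d, ne_of_mem_of_not_mem hd hx |>.symm⟩⟩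
    rw [← diam_closedBall_eq d h.le]
    exact diam_mono (closedBall_irad'_subset hDcl hd) hDb

lemma infDist_add_two_mul_le_of_closedBall_subset {d y : X} {ρ δ : ℝ} (hρ : 0 ≤ ρ)
    (hball : closedBall d ρ ⊆ D) (hy : ∀ w ∈ D, dist y w ≤ δ) (hyd : ρ < dist y d) :
    infDist y D + 2 * ρ ≤ δ := by
  rw [dist_eq_norm] at hyd
  set c := ρ / ‖y - d‖
  have hc0 : 0 ≤ c := by positivity
  have hc1 : c ≤ 1 := div_le_one_of_le₀ hyd.le (norm_nonneg _)
  have hcρ : c * ‖y - d‖ = ρ := div_mul_cancel₀ ρ (by linarith)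
  have hv : ‖c • (y - d)‖ = ρ := by rw [norm_smul, Real.norm_of_nonneg hc0, hcρ]
  have hnear : d + c • (y - d) ∈ D := hball <| by simp [hv]
  have hfar : d - c • (y - d) ∈ D := hball <| by simp [hv]
  have hdist_near : dist y (d + c • (y - d)) = ‖y - d‖ - ρ := by
    rw [dist_eq_norm, show y - (d + c • (y - d)) = (1 - c) • (y - d) by module, norm_smul,
      Real.norm_of_nonneg (by linarith), sub_mul, one_mul, hcρ]
  have hdist_far : dist y (d - c • (y - d)) = ‖y - d‖ + ρ := by
    rw [dist_eq_norm, show y - (d - c • (y - d)) = (1 + c) • (y - d) by module, norm_smul,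
      Real.norm_of_nonneg (by linarith), add_mul, one_mul, hcρ]
  have := infDist_le_dist_of_mem hnear (x := y)
  linarith [hy _ hfar]

lemma infDist_add_two_mul_irad'_le_diam (hDb : IsBounded D) (hDcl : IsClosed D) {y d : X}
    (hy : y ∈ ballInt D) (hd : d ∈ D) : infDist y D + 2 * irad' D d ≤ diam D := by
  rcases le_or_gt (dist y d) (irad' D d) with hyd | hyd
  · rw [infDist_zero_of_mem (closedBall_irad'_subset hDcl hd hyd), zero_add]
    exact two_mul_irad'_le_diam hDb hDcl hd
  · exact infDist_add_two_mul_le_of_closedBall_subset (irad'_nonneg D d)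
      (closedBall_irad'_subset hDcl hd) (fun w hw => mem_iInter₂.mp hy w hw) hyd

end Normed

theorem stmt2_general [NormedAddCommGroup X] [NormedSpace ℝ X]
    (D : Set X) (hDb : IsBounded D) (hDcl : IsClosed D)
    (hDnt : D.Nontrivial) :
    Metric.hausdorffDist D (ballInt D) ≤ Metric.diam D - 2 * irad D ∧
    Metric.diam D - 2 * irad D ≤ 2 * (rad D - irad D) := by
  have hD : D.Nonempty := hDnt.nonempty
  have hirad : 2 * irad D ≤ diam D := by
    have := irad_le (c := diam D / 2) hD fun d hd => by
      linarith [two_mul_irad'_le_diam hDb hDcl hd]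
    linarith
  refine ⟨hausdorffDist_le_of_infDist (by linarith) (fun x hx => ?_) (fun y hy => ?_), ?_⟩
  · rw [infDist_zero_of_mem (subset_ballInt hDb hx)]
    linarith
  · have := irad_le (c := (diam D - infDist y D) / 2) hD fun d hd => by
      linarith [infDist_add_two_mul_irad'_le_diam hDb hDcl hy hd]
    linarith
  · linarith [diam_le_two_mul_rad hDb]

/-- H(D,D') ≤ δ(D) − 2r'(D) ≤ 2(r(D) − r'(D)). -/
theorem stmt2 [NormedAddCommGroup X] [NormedSpace ℝ X] [CompleteSpace X]
    (D : Set X) (hDb : IsBounded D) (hDcl : IsClosed D) (hDcv : Convex ℝ D)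
    (hDnt : D.Nontrivial) :
    Metric.hausdorffDist D (ballInt D) ≤ Metric.diam D - 2 * irad D ∧
    Metric.diam D - 2 * irad D ≤ 2 * (rad D - irad D) :=
  stmt2_general D hDb hDcl hDnt
end

section
/- Let X be a real Banach space and D ⊆ X a bounded, closed, convex set containing at least two points. Let H(D) = sup{H(D₁,D₂) : D₁, D₂ are completions of D}, where H denotes the Hausdorff distance. Then δ(D') − δ(D) ≤ H(D). -/
open Metric Set Bornology

variable {X : Type*}

lemma bounded_of_diam_pos [NormedAddCommGroup X] {C : Set X} (h : 0 < Metric.diam C) : IsBounded C := by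
  by_contra hb
  rw [Metric.diam_eq_zero_of_unbounded hb] at h
  exact lt_irrefl _ h

lemma exists_completion' [NormedAddCommGroup X] (D : Set X) (hDb : IsBounded D) (hpos : 0 < Metric.diam D) :
    ∃ C, (∀ x ∉ C, Metric.diam C < Metric.diam (insert x C)) ∧ D ⊆ C ∧
      Metric.diam C = Metric.diam D := by
  obtain ⟨d₀, hd₀⟩ : D.Nonempty := by
    rcases eq_empty_or_nonempty D with h | h
    · simp [h, Metric.diam_empty] at hpos
    · exact h
  set S : Set (Set X) := {C | D ⊆ C ∧ Metric.diam C = Metric.diam D} with hS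
  have hDS : D ∈ S := ⟨subset_rfl, rfl⟩
  have hchain : ∀ c ⊆ S, IsChain (· ⊆ ·) c → c.Nonempty → ∃ ub ∈ S, ∀ s ∈ c, s ⊆ ub := by
    intro c hc hchain ⟨s₀, hs₀⟩
    refine ⟨⋃₀ c, ⟨?_, ?_⟩, fun s hs => subset_sUnion_of_mem hs⟩
    · exact (hc hs₀).1.trans (subset_sUnion_of_mem hs₀)
    · have hle : Metric.diam (⋃₀ c) ≤ Metric.diam D := by
        apply Metric.diam_le_of_forall_dist_le Metric.diam_nonneg
        rintro x hx y hy
        obtain ⟨s, hs, hxs⟩ := hx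
        obtain ⟨t, ht, hyt⟩ := hy
        rcases hchain.total hs ht with hst | hts
        · have hb : IsBounded t := bounded_of_diam_pos ((hc ht).2 ▸ hpos)
          calc dist x y ≤ Metric.diam t := Metric.dist_le_diam_of_mem hb (hst hxs) hyt
            _ = Metric.diam D := (hc ht).2
        · have hb : IsBounded s := bounded_of_diam_pos ((hc hs).2 ▸ hpos)
          calc dist x y ≤ Metric.diam s := Metric.dist_le_diam_of_mem hb hxs (hts hyt)
            _ = Metric.diam D := (hc hs).2
      have hbdd : IsBounded (⋃₀ c) := by
        apply (Metric.isBounded_iff_subset_closedBall d₀).2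
        refine ⟨Metric.diam D, fun x hx => ?_⟩
        obtain ⟨s, hs, hxs⟩ := hx
        have hb : IsBounded s := bounded_of_diam_pos ((hc hs).2 ▸ hpos)
        have : dist x d₀ ≤ Metric.diam s :=
          Metric.dist_le_diam_of_mem hb hxs ((hc hs).1 hd₀)
        simpa [Metric.mem_closedBall] using this.trans_eq (hc hs).2
      have hge : Metric.diam D ≤ Metric.diam (⋃₀ c) :=
        Metric.diam_mono ((hc hs₀).1.trans (subset_sUnion_of_mem hs₀)) hbdd
      exact le_antisymm hle hge
  obtain ⟨C, hDC, hmax⟩ := zorn_subset_nonempty S hchain D hDS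
  refine ⟨C, ?_, hmax.prop.1, hmax.prop.2⟩
  intro x hx
  by_contra hlt
  push_neg at hlt
  have hCb : IsBounded C := bounded_of_diam_pos (hmax.prop.2 ▸ hpos)
  have hmono : Metric.diam C ≤ Metric.diam (insert x C) :=
    Metric.diam_mono (subset_insert _ _) (hCb.insert x)
  have heq : Metric.diam (insert x C) = Metric.diam D :=
    le_antisymm (hlt.trans_eq hmax.prop.2) (hmax.prop.2 ▸ hmono)
  have : insert x C ⊆ C :=
    hmax.le_of_ge ⟨hmax.prop.1.trans (subset_insert _ _), heq⟩ (subset_insert _ _)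
  exact hx (this (mem_insert _ _))

lemma diam_insert_of_mem_ballInt [NormedAddCommGroup X] {D : Set X} (hDb : IsBounded D)
    {x : X} (hx : x ∈ ballInt D) : Metric.diam (insert x D) = Metric.diam D := by
  have hxD : ∀ d ∈ D, dist x d ≤ Metric.diam D := by
    intro d hd
    have := Set.mem_iInter₂.1 hx d hd
    simpa [Metric.mem_closedBall] using this
  refine le_antisymm ?_ (Metric.diam_mono (subset_insert _ _) (hDb.insert x))
  apply Metric.diam_le_of_forall_dist_le Metric.diam_nonneg
  rintro a (rfl | ha) b (rfl | hb)
  · simp [Metric.diam_nonneg]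
  · exact hxD b hb
  · rw [dist_comm]; exact hxD a ha
  · exact Metric.dist_le_diam_of_mem hDb ha hb

/-- δ(D') − δ(D) ≤ H(D) := sup of Hausdorff distances between completions. -/
theorem stmt4 [NormedAddCommGroup X] [NormedSpace ℝ X] [CompleteSpace X]
    (D : Set X) (hDb : IsBounded D) (hDcl : IsClosed D) (hDcv : Convex ℝ D)
    (hDnt : D.Nontrivial) :
    Metric.diam (ballInt D) - Metric.diam D ≤
      sSup {h : ℝ | ∃ D₁ D₂ : Set X, IsCompletion D D₁ ∧ IsCompletion D D₂ ∧
        h = Metric.hausdorffDist D₁ D₂} := by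
  set S : Set ℝ := {h : ℝ | ∃ D₁ D₂ : Set X, IsCompletion D D₁ ∧ IsCompletion D D₂ ∧
        h = Metric.hausdorffDist D₁ D₂} with hSdef
  obtain ⟨p, hp, q, hq, hpq⟩ := hDnt
  have hpos : 0 < Metric.diam D :=
    lt_of_lt_of_le (dist_pos.2 hpq) (Metric.dist_le_diam_of_mem hDb hp hq)
  have hDne : D.Nonempty := ⟨p, hp⟩
  -- completions are bounded, nonempty, and any point is within diam D of points of D
  have hcb : ∀ C : Set X, IsCompletion D C → IsBounded C := fun C hC =>
    bounded_of_diam_pos (hC.2.2 ▸ hpos)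
  -- S is bounded above by diam D
  have hBdd : BddAbove S := by
    refine ⟨Metric.diam D, fun h hh => ?_⟩
    obtain ⟨D₁, D₂, h₁, h₂, rfl⟩ := hh
    refine Metric.hausdorffDist_le_of_mem_dist hpos.le ?_ ?_
    · intro a ha
      exact ⟨p, h₂.2.1 hp, (Metric.dist_le_diam_of_mem (hcb _ h₁) ha (h₁.2.1 hp)).trans
        h₁.2.2.le⟩
    · intro a ha
      exact ⟨p, h₁.2.1 hp, (Metric.dist_le_diam_of_mem (hcb _ h₂) ha (h₂.2.1 hp)).trans
        h₂.2.2.le⟩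
  -- S is nonempty
  obtain ⟨C₀, hC₀dm, hC₀sub, hC₀diam⟩ := exists_completion' D hDb hpos
  have hC₀ : IsCompletion D C₀ := ⟨hC₀dm, hC₀sub, hC₀diam⟩
  have hSne : Metric.hausdorffDist C₀ C₀ ∈ S := ⟨C₀, C₀, hC₀, hC₀, rfl⟩
  have hSupNonneg : 0 ≤ sSup S :=
    le_trans Metric.hausdorffDist_nonneg (le_csSup hBdd hSne)
  -- main bound
  have hmain : Metric.diam (ballInt D) ≤ Metric.diam D + sSup S := by
    apply Metric.diam_le_of_forall_dist_le (add_nonneg Metric.diam_nonneg hSupNonneg)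
    intro x hx y hy
    have heqx := diam_insert_of_mem_ballInt hDb hx
    have heqy := diam_insert_of_mem_ballInt hDb hy
    obtain ⟨C₁, hC₁dm, hC₁sub, hC₁diam⟩ :=
      exists_completion' (insert x D) (hDb.insert x) (heqx ▸ hpos)
    obtain ⟨C₂, hC₂dm, hC₂sub, hC₂diam⟩ :=
      exists_completion' (insert y D) (hDb.insert y) (heqy ▸ hpos)
    have hC₁ : IsCompletion D C₁ :=
      ⟨hC₁dm, (subset_insert x D).trans hC₁sub, hC₁diam.trans heqx⟩
    have hC₂ : IsCompletion D C₂ :=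
      ⟨hC₂dm, (subset_insert y D).trans hC₂sub, hC₂diam.trans heqy⟩
    have hH : Metric.hausdorffDist C₁ C₂ ≤ sSup S := le_csSup hBdd ⟨C₁, C₂, hC₁, hC₂, rfl⟩
    have hfin : EMetric.hausdorffEdist C₁ C₂ ≠ ⊤ :=
      Metric.hausdorffEdist_ne_top_of_nonempty_of_bounded
        ⟨x, hC₁sub (mem_insert x D)⟩ ⟨y, hC₂sub (mem_insert y D)⟩
        (hcb _ hC₁) (hcb _ hC₂)
    refine le_of_forall_pos_le_add fun ε hε => ?_
    obtain ⟨z, hz, hdz⟩ := Metric.exists_dist_lt_of_hausdorffDist_lt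
      (hC₁sub (mem_insert x D)) (lt_of_le_of_lt hH (lt_add_of_pos_right _ hε)) hfin
    have hzy : dist z y ≤ Metric.diam D :=
      (Metric.dist_le_diam_of_mem (hcb _ hC₂) hz (hC₂sub (mem_insert y D))).trans
        hC₂.2.2.le
    calc dist x y ≤ dist x z + dist z y := dist_triangle x z y
      _ ≤ (sSup S + ε) + Metric.diam D := add_le_add hdz.le hzy
      _ = Metric.diam D + sSup S + ε := by ring
  linarith
end

section
/- Let X be a real Banach space in which every complete set C satisfies the constant diameter condition: r(C,x) = δ(C) + dist(x,C) for every x ∉ C. Let D ⊆ X be a bounded, closed, convex set containing at least two points, and let H(D) = sup{H(D₁,D₂) : D₁, D₂ are completions of D}. Then δ(D') − δ(D) = H(D). -/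
open Metric Set Bornology

variable {X : Type*}

lemma exists_completion'_s5 [NormedAddCommGroup X] (A : Set X) (hA : IsBounded A)
    (hne : A.Nonempty) :
    ∃ C : Set X, IsDM C ∧ A ⊆ C ∧ IsBounded C ∧ Metric.diam C = Metric.diam A := by
  obtain ⟨a, ha⟩ := hne
  set d := Metric.diam A with hd
  set S : Set (Set X) := {C | A ⊆ C ∧ IsBounded C ∧ Metric.diam C ≤ d} with hS
  have hAS : A ∈ S := ⟨subset_rfl, hA, le_rfl⟩
  have hzorn : ∀ c ⊆ S, IsChain (· ⊆ ·) c → c.Nonempty → ∃ ub ∈ S, ∀ s ∈ c, s ⊆ ub := by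
    rintro c hcS hchain ⟨B0, hB0⟩
    refine ⟨⋃₀ c, ⟨?_, ?_, ?_⟩, fun s hs => subset_sUnion_of_mem hs⟩
    · exact (hcS hB0).1.trans (subset_sUnion_of_mem hB0)
    · apply (isBounded_closedBall (x := a) (r := d)).subset
      rintro x ⟨B, hB, hxB⟩
      have hBS := hcS hB
      exact mem_closedBall.2 ((Metric.dist_le_diam_of_mem hBS.2.1 hxB (hBS.1 ha)).trans hBS.2.2)
    · apply Metric.diam_le_of_forall_dist_le Metric.diam_nonneg
      rintro x ⟨B1, hB1, hx⟩ y ⟨B2, hB2, hy⟩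
      rcases hchain.total hB1 hB2 with h | h
      · exact (Metric.dist_le_diam_of_mem (hcS hB2).2.1 (h hx) hy).trans (hcS hB2).2.2
      · exact (Metric.dist_le_diam_of_mem (hcS hB1).2.1 hx (h hy)).trans (hcS hB1).2.2
  obtain ⟨m, hAm, hmax⟩ := zorn_subset_nonempty S hzorn A hAS
  obtain ⟨hAm', hmb, hmd⟩ := hmax.prop
  have hdm : Metric.diam m = d := le_antisymm hmd (Metric.diam_mono hAm hmb)
  refine ⟨m, ?_, hAm, hmb, hdm⟩
  intro x hx
  by_contra hcon
  push_neg at hcon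
  have hmem : insert x m ∈ S := ⟨hAm'.trans (subset_insert x m), hmb.insert x,
    hcon.trans_eq hdm⟩
  have := hmax.eq_of_subset hmem (subset_insert x m)
  exact hx (this ▸ mem_insert x m)

/-- if every complete set has the constant diameter property (CD), then
δ(D') − δ(D) = H(D). -/
theorem stmt5 [NormedAddCommGroup X] [NormedSpace ℝ X] [CompleteSpace X]
    (hCD : ∀ C : Set X, IsDM C → ∀ x ∉ C,
      frad C x = Metric.diam C + Metric.infDist x C)
    (D : Set X) (hDb : IsBounded D) (hDcl : IsClosed D) (hDcv : Convex ℝ D)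
    (hDnt : D.Nontrivial) :
    Metric.diam (ballInt D) - Metric.diam D =
      sSup {h : ℝ | ∃ D₁ D₂ : Set X, IsCompletion D D₁ ∧ IsCompletion D D₂ ∧
        h = Metric.hausdorffDist D₁ D₂} := by
  set d := Metric.diam D with hd
  obtain ⟨p, hp, q, hq, hpq⟩ := hDnt
  have hd0 : 0 < d := lt_of_lt_of_le (dist_pos.2 hpq) (Metric.dist_le_diam_of_mem hDb hp hq)
  have hDne : D.Nonempty := ⟨p, hp⟩
  -- D ⊆ ballInt D
  have hDD' : D ⊆ ballInt D := by
    intro x hx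
    exact mem_iInter₂.2 fun y hy => mem_closedBall.2 (Metric.dist_le_diam_of_mem hDb hx hy)
  have hmemBI : ∀ x ∈ ballInt D, ∀ y ∈ D, dist x y ≤ d := by
    intro x hx y hy
    exact mem_closedBall.1 (mem_iInter₂.1 hx y hy)
  have hD'b : IsBounded (ballInt D) := by
    apply (isBounded_closedBall (x := p) (r := d)).subset
    intro x hx; exact mem_closedBall.2 (hmemBI x hx p hp)
  have hdd' : d ≤ Metric.diam (ballInt D) := Metric.diam_mono hDD' hD'b
  -- completions are bounded and sit inside ballInt D
  have hcb : ∀ C : Set X, IsCompletion D C → IsBounded C := by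
    intro C ⟨_, hDC, hCd⟩
    by_contra hub
    rw [Metric.diam_eq_zero_of_unbounded hub] at hCd
    exact hd0.ne hCd
  have hcsub : ∀ C : Set X, IsCompletion D C → C ⊆ ballInt D := by
    intro C hC y hy
    exact mem_iInter₂.2 fun z hz => mem_closedBall.2
      ((Metric.dist_le_diam_of_mem (hcb C hC) hy (hC.2.1 hz)).trans hC.2.2.le)
  -- frad bounds
  have hfradle : ∀ C : Set X, C ⊆ ballInt D → C.Nonempty → ∀ x ∈ ballInt D,
      frad C x ≤ Metric.diam (ballInt D) := by
    rintro C hC ⟨c0, hc0⟩ x hx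
    refine csSup_le (Set.Nonempty.image _ ⟨c0, hc0⟩) ?_
    rintro b ⟨c, hc', rfl⟩
    exact Metric.dist_le_diam_of_mem hD'b hx (hC hc')
  have hfradge : ∀ C : Set X, C ⊆ ballInt D → ∀ x ∈ ballInt D, ∀ y ∈ C,
      dist x y ≤ frad C x := by
    intro C hC x hx y hy
    have hb : BddAbove ((fun a => dist x a) '' C) := by
      refine ⟨Metric.diam (ballInt D), ?_⟩
      rintro b ⟨c, hc', rfl⟩
      exact Metric.dist_le_diam_of_mem hD'b hx (hC hc')
    exact le_csSup hb (Set.mem_image_of_mem _ hy)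
  set S : Set ℝ := {h : ℝ | ∃ D₁ D₂ : Set X, IsCompletion D D₁ ∧ IsCompletion D D₂ ∧
    h = Metric.hausdorffDist D₁ D₂} with hSdef
  -- upper bound for S
  have hub : ∀ h ∈ S, h ≤ Metric.diam (ballInt D) - d := by
    rintro h ⟨D₁, D₂, h1, h2, rfl⟩
    have hne1 : D₁.Nonempty := ⟨p, h1.2.1 hp⟩
    have hne2 : D₂.Nonempty := ⟨p, h2.2.1 hp⟩
    apply Metric.hausdorffDist_le_of_infDist (by linarith)
    · intro x hx
      by_cases hx2 : x ∈ D₂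
      · rw [Metric.infDist_zero_of_mem hx2]; linarith
      · have := hCD D₂ h2.1 x hx2
        rw [h2.2.2] at this
        have h3 : frad D₂ x ≤ Metric.diam (ballInt D) :=
          hfradle D₂ (hcsub D₂ h2) hne2 x (hcsub D₁ h1 hx)
        linarith
    · intro x hx
      by_cases hx1 : x ∈ D₁
      · rw [Metric.infDist_zero_of_mem hx1]; linarith
      · have := hCD D₁ h1.1 x hx1
        rw [h1.2.2] at this
        have h3 : frad D₁ x ≤ Metric.diam (ballInt D) :=
          hfradle D₁ (hcsub D₁ h1) hne1 x (hcsub D₂ h2 hx)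
        linarith
  obtain ⟨C0, hC0dm, hC0sub, hC0b, hC0d⟩ := exists_completion'_s5 D hDb hDne
  have hC0 : IsCompletion D C0 := ⟨hC0dm, hC0sub, hC0d⟩
  have h0S : (0 : ℝ) ∈ S := ⟨C0, C0, hC0, hC0, Metric.hausdorffDist_self_zero.symm⟩
  have hSne : S.Nonempty := ⟨0, h0S⟩
  have hbdd : BddAbove S := ⟨Metric.diam (ballInt D) - d, hub⟩
  have hS0 : (0 : ℝ) ≤ sSup S := le_csSup hbdd h0S
  refine le_antisymm ?_ (csSup_le hSne hub)
  -- lower bound: diam D' - d ≤ sSup S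
  apply le_of_forall_pos_le_add
  intro ε hε
  rw [← sub_le_iff_le_add]
  by_cases hc : Metric.diam (ballInt D) - ε < 0
  · linarith
  push_neg at hc
  -- find x y ∈ ballInt D with dist x y > diam - ε
  have hxy : ∃ x ∈ ballInt D, ∃ y ∈ ballInt D,
      Metric.diam (ballInt D) - ε < dist x y := by
    by_contra hcon
    push_neg at hcon
    have := Metric.diam_le_of_forall_dist_le hc hcon
    linarith
  obtain ⟨x, hx, y, hy, hxyd⟩ := hxy
  have hins : ∀ z ∈ ballInt D, Metric.diam (insert z D) = d := by
    intro z hz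
    refine le_antisymm (Metric.diam_le_of_forall_dist_le hd0.le ?_)
      (Metric.diam_mono (subset_insert z D) (hDb.insert z))
    rintro u (rfl | hu) v (rfl | hv)
    · simp [hd0.le]
    · exact hmemBI u hz v hv
    · rw [dist_comm]; exact hmemBI v hz u hu
    · exact Metric.dist_le_diam_of_mem hDb hu hv
  obtain ⟨C₁, hC₁dm, hC₁sub, hC₁b, hC₁d⟩ :=
    exists_completion'_s5 (insert x D) (hDb.insert x) (insert_nonempty x D)
  obtain ⟨C₂, hC₂dm, hC₂sub, hC₂b, hC₂d⟩ :=
    exists_completion'_s5 (insert y D) (hDb.insert y) (insert_nonempty y D)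
  have hC₁ : IsCompletion D C₁ :=
    ⟨hC₁dm, (subset_insert x D).trans hC₁sub, by rw [hC₁d, hins x hx]⟩
  have hC₂ : IsCompletion D C₂ :=
    ⟨hC₂dm, (subset_insert y D).trans hC₂sub, by rw [hC₂d, hins y hy]⟩
  have hin : Metric.hausdorffDist C₁ C₂ ∈ S := ⟨C₁, C₂, hC₁, hC₂, rfl⟩
  have hkey : Metric.diam (ballInt D) - d - ε ≤ Metric.hausdorffDist C₁ C₂ := by
    by_cases hxC2 : x ∈ C₂
    · have h1 : dist x y ≤ d :=
        (Metric.dist_le_diam_of_mem hC₂b hxC2 (hC₂sub (mem_insert y D))).trans hC₂.2.2.le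
      have h2 := Metric.hausdorffDist_nonneg (s := C₁) (t := C₂)
      linarith
    · have hcd := hCD C₂ hC₂dm x hxC2
      rw [hC₂.2.2] at hcd
      have h1 : dist x y ≤ frad C₂ x :=
        hfradge C₂ (hcsub C₂ hC₂) x hx y (hC₂sub (mem_insert y D))
      have h2 : Metric.infDist x C₂ ≤ Metric.hausdorffDist C₁ C₂ :=
        Metric.infDist_le_hausdorffDist_of_mem (hC₁sub (mem_insert x D))
          (Metric.hausdorffEdist_ne_top_of_nonempty_of_bounded ⟨p, hC₁.2.1 hp⟩
            ⟨p, hC₂.2.1 hp⟩ hC₁b hC₂b)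
      linarith
  exact hkey.trans (le_csSup hbdd hin)
end

section
/- Let X be a real Banach space and D ⊆ X a bounded, closed, convex set containing at least two points. Then inf{H(D₁,D) : D₁ is a completion of D} ≥ H(D, D^c), where H denotes the Hausdorff distance. -/
/-!
Every completion `C` of `D` contains the ball hull: each point of `C` is the center of a ball of
radius `δ(D)` containing `D`, so a point of `D^c` lies within `δ(D)` of every point of `C`, and
diametral maximality forces it into `C`. Hence `D ⊆ D^c ⊆ C`, which gives
`H(D, D^c) ≤ H(D, C)`. Completions exist by Zorn's lemma, so the infimum is not the junk
value `sInf ∅ = 0`.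
-/

open Metric Set Bornology

variable {X : Type*}

theorem Metric.hausdorffDist_le_hausdorffDist_of_subset {α : Type*} [PseudoMetricSpace α]
    {s t u : Set α} (hst : s ⊆ t) (htu : t ⊆ u) (hs : s.Nonempty) (hu : IsBounded u) :
    hausdorffDist s t ≤ hausdorffDist s u := by
  have hfin : hausdorffEDist u s ≠ ⊤ :=
    hausdorffEDist_ne_top_of_nonempty_of_bounded (hs.mono (hst.trans htu)) hs hu
      (hu.subset (hst.trans htu))
  refine hausdorffDist_le_of_infDist hausdorffDist_nonneg (fun x hx => ?_) (fun x hx => ?_)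
  · rw [infDist_zero_of_mem (hst hx)]
    exact hausdorffDist_nonneg
  · rw [hausdorffDist_comm]
    exact infDist_le_hausdorffDist_of_mem (htu hx) hfin

theorem Metric.ediam_sUnion_le_of_isChain {α : Type*} [PseudoEMetricSpace α] {c : Set (Set α)}
    {d : ENNReal} (hc : IsChain (· ⊆ ·) c) (h : ∀ s ∈ c, ediam s ≤ d) : ediam (⋃₀ c) ≤ d := by
  refine ediam_le ?_
  rintro x ⟨s, hs, hxs⟩ y ⟨t, ht, hyt⟩
  rcases hc.total hs ht with hst | hts
  · exact (edist_le_ediam_of_mem (hst hxs) hyt).trans (h t ht)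
  · exact (edist_le_ediam_of_mem hxs (hts hyt)).trans (h s hs)

section Completion

variable [NormedAddCommGroup X] {C D : Set X}

theorem subset_ballHull (D : Set X) : D ⊆ ballHull D :=
  fun _ hz => mem_iInter₂.mpr fun _ hy => hy hz

theorem IsDM.mem_of_forall_dist_le (hC : IsDM C) (hCb : IsBounded C) {z : X}
    (hz : ∀ y ∈ C, dist z y ≤ diam C) : z ∈ C := by
  by_contra hzC
  refine (hC z hzC).not_ge (diam_le_of_forall_dist_le diam_nonneg ?_)
  rintro x (rfl | hx) y (rfl | hy)
  · simp [diam_nonneg]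
  · exact hz y hy
  · exact dist_comm x _ ▸ hz x hx
  · exact dist_le_diam_of_mem hCb hx hy

theorem exists_isCompletion (hD : IsBounded D) : ∃ C : Set X, IsCompletion D C := by
  obtain ⟨C, hDC, hmax⟩ := zorn_subset_nonempty {C | D ⊆ C ∧ ediam C ≤ ediam D}
    (fun c hcS hc ⟨s, hs⟩ => ⟨⋃₀ c, ⟨(hcS hs).1.trans (subset_sUnion_of_mem hs),
      ediam_sUnion_le_of_isChain hc fun t ht => (hcS ht).2⟩, fun _ => subset_sUnion_of_mem⟩)
    D ⟨subset_rfl, le_rfl⟩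
  have hediam : ediam C = ediam D := le_antisymm hmax.1.2 (ediam_mono hDC)
  refine ⟨C, fun x hx => ?_, hDC, congrArg ENNReal.toReal hediam⟩
  have hlt : ediam C < ediam (insert x C) := by
    rw [hediam]
    by_contra! hle
    exact hx (hmax.2 ⟨hDC.trans (subset_insert x C), hle⟩ (subset_insert x C) (mem_insert x C))
  have hCb : IsBounded C := isBounded_iff_ediam_ne_top.mpr (hediam ▸ hD.ediam_ne_top)
  exact ENNReal.toReal_strict_mono (hCb.insert x).ediam_ne_top hlt

theorem IsCompletion.isBounded (hC : IsCompletion D C) (hD : 0 < diam D) : IsBounded C := by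
  by_contra hCb
  exact hD.ne' (hC.2.2 ▸ diam_eq_zero_of_unbounded hCb)

theorem IsCompletion.ballHull_subset (hC : IsCompletion D C) (hCb : IsBounded C) :
    ballHull D ⊆ C := by
  obtain ⟨hCmax, hDC, hdiam⟩ := hC
  intro z hz
  refine hCmax.mem_of_forall_dist_le hCb fun y hy => ?_
  have hcenter : D ⊆ closedBall y (diam D) := fun w hw =>
    mem_closedBall.mpr (hdiam ▸ dist_le_diam_of_mem hCb (hDC hw) hy)
  exact hdiam ▸ mem_closedBall.mp (mem_iInter₂.mp hz y hcenter)

end Completion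

theorem stmt7_general [NormedAddCommGroup X]
    (D : Set X) (hDb : IsBounded D)
    (hDnt : D.Nontrivial) :
    sInf {h : ℝ | ∃ D₁ : Set X, IsCompletion D D₁ ∧ h = Metric.hausdorffDist D₁ D} ≥
      Metric.hausdorffDist D (ballHull D) := by
  obtain ⟨C₀, hC₀⟩ := exists_isCompletion hDb
  refine le_csInf ⟨_, C₀, hC₀, rfl⟩ ?_
  rintro _ ⟨C, hC, rfl⟩
  have hCb : IsBounded C := hC.isBounded (diam_pos hDnt hDb)
  exact (hausdorffDist_le_hausdorffDist_of_subset (subset_ballHull D) (hC.ballHull_subset hCb)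
    hDnt.nonempty hCb).trans_eq hausdorffDist_comm

/-- inf{H(D₁,D) : D₁ a completion of D} ≥ H(D, D^c). -/
theorem stmt7 [NormedAddCommGroup X] [NormedSpace ℝ X] [CompleteSpace X]
    (D : Set X) (hDb : IsBounded D) (hDcl : IsClosed D) (hDcv : Convex ℝ D)
    (hDnt : D.Nontrivial) :
    sInf {h : ℝ | ∃ D₁ : Set X, IsCompletion D D₁ ∧ h = Metric.hausdorffDist D₁ D} ≥
      Metric.hausdorffDist D (ballHull D) :=
  stmt7_general D hDb hDnt
end

section
/- Let X be a real Banach space and let D₁ and D₂ be two different complete sets (each bounded, closed, convex, with at least two points) such that δ(D₁) = δ(D₂) = δ(D₁ ∩ D₂). Then D₁ ∩ D₂ is not complete. -/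
open Metric Set Bornology

variable {X : Type*}

/-- if D₁, D₂ are different complete sets with
δ(D₁) = δ(D₂) = δ(D₁ ∩ D₂), then D₁ ∩ D₂ is not complete. -/
theorem stmt9 [NormedAddCommGroup X] [NormedSpace ℝ X] [CompleteSpace X]
    (D₁ D₂ : Set X)
    (h₁b : IsBounded D₁) (h₁cl : IsClosed D₁) (h₁cv : Convex ℝ D₁) (h₁nt : D₁.Nontrivial)
    (h₂b : IsBounded D₂) (h₂cl : IsClosed D₂) (h₂cv : Convex ℝ D₂) (h₂nt : D₂.Nontrivial)
    (h₁ : IsDM D₁) (h₂ : IsDM D₂) (hne : D₁ ≠ D₂)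
    (hd₁ : Metric.diam D₁ = Metric.diam D₂)
    (hd₂ : Metric.diam D₂ = Metric.diam (D₁ ∩ D₂)) :
    ¬ IsDM (D₁ ∩ D₂) := by
  intro hDM
  have hdd : Metric.diam (D₁ ∩ D₂) = Metric.diam D₁ := by rw [hd₁, hd₂]
  have key₁ : D₁ ⊆ D₁ ∩ D₂ := by
    intro x hx
    by_contra hx'
    have h1 := hDM x hx'
    have h2 : Metric.diam (insert x (D₁ ∩ D₂)) ≤ Metric.diam D₁ :=
      Metric.diam_mono (Set.insert_subset hx Set.inter_subset_left) h₁b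
    rw [hdd] at h1; linarith
  have key₂ : D₂ ⊆ D₁ ∩ D₂ := by
    intro x hx
    by_contra hx'
    have h1 := hDM x hx'
    have h2 : Metric.diam (insert x (D₁ ∩ D₂)) ≤ Metric.diam D₂ :=
      Metric.diam_mono (Set.insert_subset hx Set.inter_subset_right) h₂b
    rw [hdd, hd₁] at h1; linarith
  exact hne (subset_antisymm (key₁.trans Set.inter_subset_right)
    (key₂.trans Set.inter_subset_left))
end

section
/- Let X be a nontrivial real Banach space, D ⊆ X a nonempty bounded set, and α, ε > 0. Set A = ⋂_{x∈D} B(x, α) and A_ε = ⋂_{x∈D} B(x, α+ε). If A ≠ ∅, then δ(A_ε) ≥ δ(A) + 2ε. -/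
open Metric Set Bornology

variable {X : Type*}

/-- if A = ⋂_{x∈D} B(x,α) is nonempty, then
δ(⋂_{x∈D} B(x,α+ε)) ≥ δ(A) + 2ε. -/
theorem stmt11 [NormedAddCommGroup X] [NormedSpace ℝ X] [CompleteSpace X] [Nontrivial X]
    (D : Set X) (hD : D.Nonempty) (hDb : IsBounded D)
    (α ε : ℝ) (hα : 0 < α) (hε : 0 < ε)
    (hA : (⋂ x ∈ D, closedBall x α).Nonempty) :
    Metric.diam (⋂ x ∈ D, closedBall x α) + 2 * ε ≤
      Metric.diam (⋂ x ∈ D, closedBall x (α + ε)) := by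
  obtain ⟨a₀, ha₀⟩ := hA
  obtain ⟨x₀, hx₀⟩ := hD
  set A := ⋂ x ∈ D, closedBall x α with hAdef
  set Aε := ⋂ x ∈ D, closedBall x (α + ε) with hAεdef
  -- Aε is bounded
  have hAεb : IsBounded Aε := (isBounded_closedBall (x := x₀) (r := α + ε)).subset
    (fun y hy => mem_iInter₂.mp hy x₀ hx₀)
  -- membership of perturbed points
  have hmem : ∀ a ∈ A, ∀ u : X, ‖u‖ = 1 → a + ε • u ∈ Aε := by
    intro a ha u hu
    refine mem_iInter₂.mpr fun x hx => ?_
    have h1 : dist a x ≤ α := mem_closedBall.mp (mem_iInter₂.mp ha x hx)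
    have : dist (a + ε • u) x ≤ dist (a + ε • u) a + dist a x := dist_triangle _ _ _
    have h2 : dist (a + ε • u) a = ε := by
      rw [dist_eq_norm]
      simp [norm_smul, hu, abs_of_pos hε]
    rw [mem_closedBall]
    calc dist (a + ε • u) x ≤ dist (a + ε • u) a + dist a x := dist_triangle _ _ _
      _ = ε + dist a x := by rw [h2]
      _ ≤ ε + α := by linarith
      _ = α + ε := by ring
  -- a unit vector exists
  obtain ⟨v, hv⟩ := exists_ne (0 : X)
  have hvn : ‖v‖ ≠ 0 := norm_ne_zero_iff.mpr hv
  have hu0 : ‖(‖v‖⁻¹ • v)‖ = 1 := by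
    rw [norm_smul, norm_inv, norm_norm, inv_mul_cancel₀ hvn]
  -- key: for a b ∈ A, dist a b + 2ε ≤ diam Aε
  have key : ∀ a ∈ A, ∀ b ∈ A, dist a b + 2 * ε ≤ Metric.diam Aε := by
    intro a ha b hb
    by_cases hab : a = b
    · subst hab
      have h1 := hmem a ha _ hu0
      have h2 : a + ε • (-(‖v‖⁻¹ • v)) ∈ Aε := hmem a ha _ (by rw [norm_neg]; exact hu0)
      have := dist_le_diam_of_mem hAεb h1 h2
      have hd : dist (a + ε • (‖v‖⁻¹ • v)) (a + ε • (-(‖v‖⁻¹ • v))) = 2 * ε := by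
        rw [dist_eq_norm]
        have : a + ε • (‖v‖⁻¹ • v) - (a + ε • (-(‖v‖⁻¹ • v))) = (2 * ε) • (‖v‖⁻¹ • v) := by
          module
        rw [this, norm_smul, hu0]
        simp [abs_of_pos hε]
      simp only [dist_self]
      linarith [hd ▸ this]
    · set u : X := ‖a - b‖⁻¹ • (a - b) with hudef
      have hab' : a - b ≠ 0 := sub_ne_zero.mpr hab
      have habn : ‖a - b‖ ≠ 0 := norm_ne_zero_iff.mpr hab'
      have hu : ‖u‖ = 1 := by
        rw [hudef, norm_smul, norm_inv, norm_norm, inv_mul_cancel₀ habn]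
      have h1 := hmem a ha u hu
      have h2 : b + ε • (-u) ∈ Aε := hmem b hb _ (by rw [norm_neg]; exact hu)
      have hle := dist_le_diam_of_mem hAεb h1 h2
      have hd : dist (a + ε • u) (b + ε • (-u)) = dist a b + 2 * ε := by
        rw [dist_eq_norm]
        have hsub : a - b = ‖a - b‖ • u := by
          rw [hudef, smul_smul, mul_inv_cancel₀ habn, one_smul]
        have heq : a + ε • u - (b + ε • (-u)) = (a - b) + (2 * ε) • u := by module
        rw [heq, hsub, ← add_smul, norm_smul, hu, mul_one, dist_eq_norm,
          Real.norm_of_nonneg (by positivity)]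
      linarith [hd ▸ hle]
  -- conclude
  have h2ε : 2 * ε ≤ Metric.diam Aε := by
    have := key a₀ ha₀ a₀ ha₀
    simpa using this
  have hdiam : Metric.diam A ≤ Metric.diam Aε - 2 * ε := by
    refine Metric.diam_le_of_forall_dist_le (by linarith) fun a ha b hb => ?_
    linarith [key a ha b hb]
  linarith
end

section
/- Let X be a real Banach space and let A, B ⊆ X be bounded, closed, convex sets containing at least two points with δ(A) ≠ δ(B). Then A^c ≠ B^c and A' ≠ B'. -/
open Metric Set Bornology

variable {X : Type*}

section Aux

variable [NormedAddCommGroup X] [NormedSpace ℝ X]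

/-- Every nonempty bounded set admits a completion. -/
lemma exists_completion_aux (B : Set X) (hne : B.Nonempty) (hb : IsBounded B) :
    ∃ C : Set X, B ⊆ C ∧ IsBounded C ∧ Metric.diam C = Metric.diam B ∧ IsDM C := by
  obtain ⟨b0, hb0⟩ := hne
  set S : Set (Set X) := {E | B ⊆ E ∧ IsBounded E ∧ Metric.diam E ≤ Metric.diam B} with hS
  have hBS : B ∈ S := ⟨Subset.rfl, hb, le_rfl⟩
  have hchain : ∀ c ⊆ S, IsChain (· ⊆ ·) c → c.Nonempty →
      ∃ ub ∈ S, ∀ s ∈ c, s ⊆ ub := by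
    intro c hcS hchain ⟨E0, hE0⟩
    refine ⟨⋃₀ c, ⟨?_, ?_, ?_⟩, fun s hs => subset_sUnion_of_mem hs⟩
    · exact ((hcS hE0).1).trans (subset_sUnion_of_mem hE0)
    · apply (isBounded_closedBall (x := b0) (r := Metric.diam B)).subset
      rintro x ⟨E, hEc, hxE⟩
      obtain ⟨hBE, hEb, hEd⟩ := hcS hEc
      exact mem_closedBall.2 ((dist_le_diam_of_mem hEb hxE (hBE hb0)).trans hEd)
    · apply Metric.diam_le_of_forall_dist_le Metric.diam_nonneg
      rintro x ⟨E1, hE1c, hxE1⟩ y ⟨E2, hE2c, hyE2⟩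
      rcases eq_or_ne E1 E2 with rfl | hne12
      · exact (dist_le_diam_of_mem (hcS hE1c).2.1 hxE1 hyE2).trans (hcS hE1c).2.2
      · rcases hchain hE1c hE2c hne12 with h | h
        · exact (dist_le_diam_of_mem (hcS hE2c).2.1 (h hxE1) hyE2).trans (hcS hE2c).2.2
        · exact (dist_le_diam_of_mem (hcS hE1c).2.1 hxE1 (h hyE2)).trans (hcS hE1c).2.2
  obtain ⟨M, hBM, hMmax⟩ := zorn_subset_nonempty S hchain B hBS
  obtain ⟨hBM', hMb, hMd⟩ := hMmax.prop
  refine ⟨M, hBM, hMb, le_antisymm hMd (Metric.diam_mono hBM hMb), ?_⟩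
  intro x hx
  by_contra hlt
  push_neg at hlt
  have hins : insert x M ∈ S := by
    refine ⟨hBM.trans (subset_insert _ _), hMb.insert x, ?_⟩
    exact hlt.trans hMd
  have := hMmax.2 hins (subset_insert _ _)
  exact hx (this (mem_insert _ _))

/-- The ball hull preserves the diameter. -/
lemma diam_ballHull_aux {D : Set X} (hne : D.Nonempty) (hb : IsBounded D) :
    Metric.diam (ballHull D) = Metric.diam D := by
  have hsub : D ⊆ ballHull D := by
    intro d hd
    simp only [ballHull, mem_iInter, mem_setOf_eq]
    intro y hy
    exact hy hd
  have hmem : ∀ v ∈ ballHull D, D ⊆ closedBall v (Metric.diam D) := by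
    intro v hv d hd
    have hdc : D ⊆ closedBall d (Metric.diam D) :=
      fun d' hd' => mem_closedBall.2 (dist_le_diam_of_mem hb hd' hd)
    have hvd : v ∈ closedBall d (Metric.diam D) := by
      simp only [ballHull, mem_iInter, mem_setOf_eq] at hv
      exact hv d hdc
    exact mem_closedBall.2 (by rw [dist_comm]; exact mem_closedBall.1 hvd)
  apply le_antisymm
  · apply Metric.diam_le_of_forall_dist_le Metric.diam_nonneg
    intro u hu v hv
    have : u ∈ closedBall v (Metric.diam D) := by
      simp only [ballHull, mem_iInter, mem_setOf_eq] at hu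
      exact hu v (hmem v hv)
    exact mem_closedBall.1 this
  · obtain ⟨d, hd⟩ := hne
    have hdc : D ⊆ closedBall d (Metric.diam D) :=
      fun d' hd' => mem_closedBall.2 (dist_le_diam_of_mem hb hd' hd)
    have hhb : IsBounded (ballHull D) := by
      apply (isBounded_closedBall (x := d) (r := Metric.diam D)).subset
      intro u hu
      simp only [ballHull, mem_iInter, mem_setOf_eq] at hu
      exact hu d hdc
    exact Metric.diam_mono hsub hhb

/-- Key lemma: if δ(A) < δ(B) then A' ≠ B'. -/
lemma ballInt_ne_aux {A B : Set X} (hAb : IsBounded A) (hAnt : A.Nontrivial)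
    (hBb : IsBounded B) (hBne : B.Nonempty)
    (hlt : Metric.diam A < Metric.diam B) : ballInt A ≠ ballInt B := by
  intro heq
  obtain ⟨C, hBC, hCb, hCd, hCdm⟩ := exists_completion_aux B hBne hBb
  set α := Metric.diam A with hα
  set β := Metric.diam B with hβ
  -- every point of C is within α of every point of A
  have hCA : ∀ c ∈ C, ∀ a ∈ A, dist c a ≤ α := by
    intro c hc a ha
    have hc' : c ∈ ballInt B := by
      simp only [ballInt, mem_iInter]
      intro b hb
      exact mem_closedBall.2 ((dist_le_diam_of_mem hCb hc (hBC hb)).trans hCd.le)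
    rw [← heq] at hc'
    simp only [ballInt, mem_iInter] at hc'
    exact mem_closedBall.1 (hc' a ha)
  have hα0 : 0 < α := by
    obtain ⟨x, hx, y, hy, hxy⟩ := hAnt
    exact lt_of_lt_of_le (dist_pos.2 hxy) (dist_le_diam_of_mem hAb hx hy)
  have hex : ∃ a1 ∈ A, ∃ a2 ∈ A, max (2 * α - β) 0 < dist a1 a2 := by
    by_contra h
    push_neg at h
    have h1 : Metric.diam A ≤ max (2 * α - β) 0 :=
      Metric.diam_le_of_forall_dist_le (le_max_right _ _) h
    have h2 : max (2 * α - β) 0 < α := max_lt (by linarith) hα0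
    rw [← hα] at h1
    linarith
  obtain ⟨a1, ha1, a2, ha2, hd12⟩ := hex
  set d := dist a1 a2 with hdd
  have hd0 : 0 < d := lt_of_le_of_lt (le_max_right _ _) hd12
  set r := β - α with hr
  have hr0 : 0 < r := by simp only [hr]; linarith
  set z := a1 + (r / d) • (a1 - a2) with hz
  have hza1 : dist z a1 = r := by
    rw [dist_eq_norm]
    have : z - a1 = (r / d) • (a1 - a2) := by rw [hz]; abel
    rw [this, norm_smul, Real.norm_eq_abs, abs_of_pos (div_pos hr0 hd0)]
    rw [← dist_eq_norm, ← hdd]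
    field_simp
  have hza2 : dist z a2 = d + r := by
    rw [dist_eq_norm]
    have : z - a2 = (1 + r / d) • (a1 - a2) := by
      rw [hz, add_smul, one_smul]; abel
    rw [this, norm_smul, Real.norm_eq_abs,
      abs_of_pos (by positivity : (0:ℝ) < 1 + r / d), ← dist_eq_norm, ← hdd]
    field_simp
  have hzC : z ∈ C := by
    by_contra hzc
    have h1 := hCdm z hzc
    have hβ0 : (0:ℝ) ≤ β := hCd ▸ Metric.diam_nonneg
    have hzy : ∀ y ∈ C, dist z y ≤ β := by
      intro y hy
      calc dist z y ≤ dist z a1 + dist a1 y := dist_triangle _ _ _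
        _ ≤ r + α := add_le_add hza1.le (by rw [dist_comm]; exact hCA y hy a1 ha1)
        _ = β := by rw [hr]; ring
    have h2 : Metric.diam (insert z C) ≤ β := by
      apply Metric.diam_le_of_forall_dist_le hβ0
      intro x hx y hy
      rcases mem_insert_iff.1 hx with rfl | hx <;> rcases mem_insert_iff.1 hy with rfl | hy
      · simpa using hβ0
      · exact hzy _ hy
      · rw [dist_comm]; exact hzy _ hx
      · exact (dist_le_diam_of_mem hCb hx hy).trans hCd.le
    rw [hCd] at h1
    exact absurd h2 (not_le.2 h1)
  have hfin : dist z a2 ≤ α := hCA z hzC a2 ha2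
  rw [hza2] at hfin
  have h2ab : 2 * α - β < d := lt_of_le_of_lt (le_max_left _ _) hd12
  simp only [hr] at hfin
  linarith

end Aux

/-- if δ(A) ≠ δ(B), then A^c ≠ B^c and A' ≠ B'. -/
theorem stmt12 [NormedAddCommGroup X] [NormedSpace ℝ X] [CompleteSpace X]
    (A B : Set X)
    (hAb : IsBounded A) (hAcl : IsClosed A) (hAcv : Convex ℝ A) (hAnt : A.Nontrivial)
    (hBb : IsBounded B) (hBcl : IsClosed B) (hBcv : Convex ℝ B) (hBnt : B.Nontrivial)
    (hd : Metric.diam A ≠ Metric.diam B) :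
    ballHull A ≠ ballHull B ∧ ballInt A ≠ ballInt B := by
  constructor
  · intro heq
    exact hd (by rw [← diam_ballHull_aux hAnt.nonempty hAb, heq,
      diam_ballHull_aux hBnt.nonempty hBb])
  · rcases hd.lt_or_gt with h | h
    · exact ballInt_ne_aux hAb hAnt hBb hBnt.nonempty h
    · exact (ballInt_ne_aux hBb hBnt hAb hAnt.nonempty h).symm
end

section
/- Let X be a finite-dimensional real normed space, let C ⊆ X be a complete set of diameter d > 0, and let D ⊆ C be a bounded, closed, convex set with δ(D) = d. Then D is minimal among subsets of C having C as a completion (i.e., every proper closed convex subset S of D satisfies δ(S) < d) if and only if D is a segment [x,y] with ‖x − y‖ = d. -/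
open Metric Set Bornology

variable {X : Type*}

lemma diam_attained' {Y : Type*} [MetricSpace Y] {s : Set Y} (hs : IsCompact s)
    (hne : s.Nonempty) : ∃ p ∈ s, ∃ q ∈ s, Metric.diam s = dist p q := by
  obtain ⟨⟨p, q⟩, hpq, hmax⟩ := (hs.prod hs).exists_isMaxOn (hne.prod hne)
    (continuous_dist.continuousOn)
  refine ⟨p, hpq.1, q, hpq.2, le_antisymm ?_ (Metric.dist_le_diam_of_mem hs.isBounded hpq.1 hpq.2)⟩
  exact Metric.diam_le_of_forall_dist_le dist_nonneg fun a ha b hb => hmax (Set.mk_mem_prod ha hb)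

lemma isCompact_segment' [NormedAddCommGroup X] [NormedSpace ℝ X] (x y : X) :
    IsCompact (segment ℝ x y) := by
  rw [segment_eq_image']
  exact isCompact_Icc.image (by continuity)

lemma dist_seg [NormedAddCommGroup X] [NormedSpace ℝ X] (x y : X) (s t : ℝ) :
    dist (x + s • (y - x)) (x + t • (y - x)) = |s - t| * ‖y - x‖ := by
  rw [dist_eq_norm]
  rw [show x + s • (y - x) - (x + t • (y - x)) = (s - t) • (y - x) by module]
  rw [norm_smul, Real.norm_eq_abs]

lemma diam_segment' [NormedAddCommGroup X] [NormedSpace ℝ X] (x y : X) :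
    Metric.diam (segment ℝ x y) = dist x y := by
  apply le_antisymm
  · apply Metric.diam_le_of_forall_dist_le dist_nonneg
    rintro a ha b hb
    rw [segment_eq_image'] at ha hb
    obtain ⟨s, hs, rfl⟩ := ha
    obtain ⟨t, ht, rfl⟩ := hb
    rw [dist_seg, dist_eq_norm]
    have : |s - t| ≤ 1 := by
      rw [abs_le]; constructor <;> [linarith [hs.1, ht.2]; linarith [hs.2, ht.1]]
    nlinarith [norm_nonneg (x - y), norm_sub_rev x y]
  · exact Metric.dist_le_diam_of_mem (isCompact_segment' x y).isBounded
      (left_mem_segment ℝ x y) (right_mem_segment ℝ x y)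


/-- in a finite-dimensional normed space, a closed convex subset D of a
complete set C with δ(D) = δ(C) = d > 0 is minimal (every proper closed convex subset
has smaller diameter) iff D is a segment of length d. -/
theorem stmt19 [NormedAddCommGroup X] [NormedSpace ℝ X] [FiniteDimensional ℝ X]
    (C : Set X) (hC : IsDM C) (d : ℝ) (hd : Metric.diam C = d) (hd0 : 0 < d)
    (D : Set X) (hDC : D ⊆ C) (hDb : IsBounded D) (hDcl : IsClosed D) (hDcv : Convex ℝ D)
    (hDd : Metric.diam D = d) :
    (∀ S : Set X, S ⊆ D → S ≠ D → IsClosed S → Convex ℝ S → Metric.diam S < d) ↔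
      ∃ x y : X, ‖x - y‖ = d ∧ D = segment ℝ x y := by
  constructor
  · intro h
    have hDne : D.Nonempty := by
      rcases D.eq_empty_or_nonempty with rfl | hne
      · rw [Metric.diam_empty] at hDd; linarith
      · exact hne
    have hDcp : IsCompact D := Metric.isCompact_of_isClosed_isBounded hDcl hDb
    obtain ⟨x, hx, y, hy, hxy⟩ := diam_attained' hDcp hDne
    have hseg : segment ℝ x y ⊆ D := hDcv.segment_subset hx hy
    have hdiam : Metric.diam (segment ℝ x y) = d := by
      rw [diam_segment', ← hxy, hDd]
    have hSD : segment ℝ x y = D := by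
      by_contra hne
      exact absurd (h _ hseg hne (isCompact_segment' x y).isClosed (convex_segment x y))
        (by rw [hdiam]; exact lt_irrefl d)
    exact ⟨x, y, by rw [← dist_eq_norm, ← hxy, hDd], hSD.symm⟩
  · rintro ⟨x, y, hxy, rfl⟩ S hSD hSne hScl hScv
    rcases S.eq_empty_or_nonempty with rfl | hne
    · simpa using hd0
    have hScp : IsCompact S := ((isCompact_segment' x y).of_isClosed_subset hScl hSD)
    obtain ⟨p, hp, q, hq, hpq⟩ := diam_attained' hScp hne
    have hSD' : S ⊆ (fun θ : ℝ => x + θ • (y - x)) '' Set.Icc 0 1 := by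
      rwa [← segment_eq_image']
    obtain ⟨s, hs, rfl⟩ := hSD' hp
    obtain ⟨t, ht, rfl⟩ := hSD' hq
    rw [hpq, dist_seg]
    have hnorm : ‖y - x‖ = d := by rw [norm_sub_rev]; exact hxy
    rw [hnorm]
    have hle : |s - t| ≤ 1 := by
      rw [abs_le]; constructor <;> [linarith [hs.1, ht.2]; linarith [hs.2, ht.1]]
    rcases lt_or_eq_of_le hle with hlt | heq
    · nlinarith
    · exfalso
      have hcases : (s = 0 ∧ t = 1) ∨ (s = 1 ∧ t = 0) := by
        rcases abs_cases (s - t) with ⟨h1, _⟩ | ⟨h1, _⟩ <;> rw [heq] at h1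
        · right; constructor <;> linarith [hs.2, ht.1]
        · left; constructor <;> linarith [hs.1, ht.2]
      have hxS : x ∈ S ∧ y ∈ S := by
        rcases hcases with ⟨rfl, rfl⟩ | ⟨rfl, rfl⟩
        · exact ⟨by simpa using hp, by simpa using hq⟩
        · exact ⟨by simpa using hq, by simpa using hp⟩
      exact hSne (le_antisymm hSD (hScv.segment_subset hxS.1 hxS.2))
end
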